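/- arXiv:2412.19536 — 9 statements merged into one kernel-verified Lean document; each statement's English description precedes it below -/
import Mathlib

section
/- Let α₁, α₂ be real numbers and let h : ℝ³ → ℝ be twice differentiable at a point x = (x₀,x₁,x₂) with x₁ ≠ 0 and x₂ ≠ 0. Then the following identity holds at x: [(x₁²+x₂²)Δh − (α₁+α₂)(x₁∂₁h + x₂∂₂h)] − (x₁²+x₂²)[Δh − (α₁/x₁)∂₁h − (α₂/x₂)∂₂h] = ((α₂x₁² − α₁x₂²)/(x₁x₂))·(x₁∂₂h − x₂∂₁h). In particular, if h satisfies the (α₁,α₂)-bihyperbolic equation at x, then h satisfies the (α₁+α₂)-axial-hyperbolic equation at x if and only if (α₂x₁² − α₁x₂²)(x₂∂₁h − x₁∂₂h) = 0 at x. -/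
noncomputable section

/-- Partial derivative of `h : ℝ → ℝ → ℝ → ℝ` in the 0th variable. -/
def pd0 (h : ℝ → ℝ → ℝ → ℝ) (a b c : ℝ) : ℝ := deriv (fun t => h t b c) a

/-- Partial derivative in the 1st variable. -/
def pd1 (h : ℝ → ℝ → ℝ → ℝ) (a b c : ℝ) : ℝ := deriv (fun t => h a t c) b

/-- Partial derivative in the 2nd variable. -/
def pd2 (h : ℝ → ℝ → ℝ → ℝ) (a b c : ℝ) : ℝ := deriv (fun t => h a b t) c

/-- Laplacian `Δh = ∂₀∂₀h + ∂₁∂₁h + ∂₂∂₂h`. -/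
def lap3 (h : ℝ → ℝ → ℝ → ℝ) (a b c : ℝ) : ℝ :=
  pd0 (pd0 h) a b c + pd1 (pd1 h) a b c + pd2 (pd2 h) a b c

theorem stmt0 (α₁ α₂ : ℝ) (h : ℝ → ℝ → ℝ → ℝ) (x₀ x₁ x₂ : ℝ)
    (hx₁ : x₁ ≠ 0) (hx₂ : x₂ ≠ 0)
    (hdiff : DifferentiableAt ℝ (fun p : ℝ × ℝ × ℝ => h p.1 p.2.1 p.2.2) (x₀, x₁, x₂))
    (hdiff2 : DifferentiableAt ℝ
      (fderiv ℝ (fun p : ℝ × ℝ × ℝ => h p.1 p.2.1 p.2.2)) (x₀, x₁, x₂)) :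
    (((x₁ ^ 2 + x₂ ^ 2) * lap3 h x₀ x₁ x₂
        - (α₁ + α₂) * (x₁ * pd1 h x₀ x₁ x₂ + x₂ * pd2 h x₀ x₁ x₂))
      - (x₁ ^ 2 + x₂ ^ 2) * (lap3 h x₀ x₁ x₂
        - (α₁ / x₁) * pd1 h x₀ x₁ x₂ - (α₂ / x₂) * pd2 h x₀ x₁ x₂)
      = ((α₂ * x₁ ^ 2 - α₁ * x₂ ^ 2) / (x₁ * x₂))
          * (x₁ * pd2 h x₀ x₁ x₂ - x₂ * pd1 h x₀ x₁ x₂))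
    ∧ ((lap3 h x₀ x₁ x₂
          - (α₁ / x₁) * pd1 h x₀ x₁ x₂ - (α₂ / x₂) * pd2 h x₀ x₁ x₂ = 0) →
        (((x₁ ^ 2 + x₂ ^ 2) * lap3 h x₀ x₁ x₂
            - (α₁ + α₂) * (x₁ * pd1 h x₀ x₁ x₂ + x₂ * pd2 h x₀ x₁ x₂) = 0)
          ↔ (α₂ * x₁ ^ 2 - α₁ * x₂ ^ 2)
              * (x₂ * pd1 h x₀ x₁ x₂ - x₁ * pd2 h x₀ x₁ x₂) = 0)) := by
  set a := pd1 h x₀ x₁ x₂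
  set b := pd2 h x₀ x₁ x₂
  set L := lap3 h x₀ x₁ x₂
  have key : ((x₁ ^ 2 + x₂ ^ 2) * L - (α₁ + α₂) * (x₁ * a + x₂ * b))
      - (x₁ ^ 2 + x₂ ^ 2) * (L - (α₁ / x₁) * a - (α₂ / x₂) * b)
      = ((α₂ * x₁ ^ 2 - α₁ * x₂ ^ 2) / (x₁ * x₂)) * (x₁ * b - x₂ * a) := by
    field_simp
    ring
  refine ⟨key, fun h0 => ?_⟩
  rw [h0, mul_zero, sub_zero] at key
  rw [key]
  rw [div_mul_eq_mul_div, div_eq_zero_iff]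
  constructor
  · rintro (hm | hm)
    · linarith [hm]
    · exact absurd hm (mul_ne_zero hx₁ hx₂)
  · intro hm
    left
    linarith [hm]
end
end

section
/- (First criterion.) Let α₁, α₂ be real numbers with (α₁,α₂) ≠ (0,0), let Λ ⊆ ℝ³ be an open set contained in {x₁ > 0, x₂ > 0}, and let h : ℝ³ → ℝ be C² on Λ and satisfy the (α₁,α₂)-bihyperbolic equation Δh − (α₁/x₁)∂₁h − (α₂/x₂)∂₂h = 0 throughout Λ. Then h satisfies the (α₁+α₂)-axial-hyperbolic equation (x₁²+x₂²)Δh − (α₁+α₂)(x₁∂₁h + x₂∂₂h) = 0 throughout Λ if and only if the axially symmetric condition x₂∂₁h = x₁∂₂h holds throughout Λ. -/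
noncomputable section

/-- First criterion: an `(α₁,α₂)`-bihyperbolic harmonic potential on an open set in the
open quarter-space `{x₁ > 0, x₂ > 0}` is an `(α₁+α₂)`-axial-hyperbolic harmonic potential
if and only if the axially symmetric condition `x₂ ∂₁h = x₁ ∂₂h` holds. -/
theorem stmt1 (α₁ α₂ : ℝ) (hα : (α₁, α₂) ≠ (0, 0)) (Λ : Set (ℝ × ℝ × ℝ))
    (hΛopen : IsOpen Λ) (hΛsub : ∀ p ∈ Λ, 0 < p.2.1 ∧ 0 < p.2.2)
    (h : ℝ → ℝ → ℝ → ℝ)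
    (hC2 : ContDiffOn ℝ 2 (fun p : ℝ × ℝ × ℝ => h p.1 p.2.1 p.2.2) Λ)
    (hbi : ∀ p ∈ Λ, lap3 h p.1 p.2.1 p.2.2
      - (α₁ / p.2.1) * pd1 h p.1 p.2.1 p.2.2
      - (α₂ / p.2.2) * pd2 h p.1 p.2.1 p.2.2 = 0) :
    (∀ p ∈ Λ, (p.2.1 ^ 2 + p.2.2 ^ 2) * lap3 h p.1 p.2.1 p.2.2
        - (α₁ + α₂) * (p.2.1 * pd1 h p.1 p.2.1 p.2.2
          + p.2.2 * pd2 h p.1 p.2.1 p.2.2) = 0)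
    ↔ (∀ p ∈ Λ, p.2.2 * pd1 h p.1 p.2.1 p.2.2 = p.2.1 * pd2 h p.1 p.2.1 p.2.2) := by
  set F : ℝ × ℝ × ℝ → ℝ := fun p => h p.1 p.2.1 p.2.2 with hFdef
  have hdiff : ∀ q ∈ Λ, DifferentiableAt ℝ F q := fun q hq =>
    (hC2.contDiffAt (hΛopen.mem_nhds hq)).differentiableAt (by norm_num)
  have hp1 : ∀ q ∈ Λ, pd1 h q.1 q.2.1 q.2.2
      = fderiv ℝ F q ((0 : ℝ), (1 : ℝ), (0 : ℝ)) := by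
    intro q hq
    have hγ : HasDerivAt (fun t : ℝ => ((q.1, t, q.2.2) : ℝ × ℝ × ℝ))
        ((0 : ℝ), (1 : ℝ), (0 : ℝ)) q.2.1 :=
      HasDerivAt.prodMk (hasDerivAt_const _ _) (HasDerivAt.prodMk (hasDerivAt_id _) (hasDerivAt_const _ _))
    have h2 : HasDerivAt (fun t : ℝ => h q.1 t q.2.2)
        (fderiv ℝ F q ((0 : ℝ), (1 : ℝ), (0 : ℝ))) q.2.1 :=
      ((hdiff q hq).hasFDerivAt.comp_hasDerivAt_of_eq q.2.1 hγ rfl)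
    exact h2.deriv
  have hp2 : ∀ q ∈ Λ, pd2 h q.1 q.2.1 q.2.2
      = fderiv ℝ F q ((0 : ℝ), (0 : ℝ), (1 : ℝ)) := by
    intro q hq
    have hγ : HasDerivAt (fun t : ℝ => ((q.1, q.2.1, t) : ℝ × ℝ × ℝ))
        ((0 : ℝ), (0 : ℝ), (1 : ℝ)) q.2.2 :=
      HasDerivAt.prodMk (hasDerivAt_const _ _) (HasDerivAt.prodMk (hasDerivAt_const _ _) (hasDerivAt_id _))
    have h2 : HasDerivAt (fun t : ℝ => h q.1 q.2.1 t)
        (fderiv ℝ F q ((0 : ℝ), (0 : ℝ), (1 : ℝ))) q.2.2 :=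
      ((hdiff q hq).hasFDerivAt.comp_hasDerivAt_of_eq q.2.2 hγ rfl)
    exact h2.deriv
  set g : ℝ × ℝ × ℝ → ℝ := fun q =>
    q.2.2 * pd1 h q.1 q.2.1 q.2.2 - q.2.1 * pd2 h q.1 q.2.1 q.2.2 with hgdef
  have hDcont : ContinuousOn (fderiv ℝ F) Λ :=
    hC2.continuousOn_fderiv_of_isOpen hΛopen (by norm_num)
  have hgcont : ContinuousOn g Λ := by
    have c1 : ContinuousOn (fun q : ℝ × ℝ × ℝ =>
        q.2.2 * fderiv ℝ F q ((0 : ℝ), (1 : ℝ), (0 : ℝ))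
        - q.2.1 * fderiv ℝ F q ((0 : ℝ), (0 : ℝ), (1 : ℝ))) Λ := by
      apply ContinuousOn.sub
      · exact ((continuous_snd.comp continuous_snd).continuousOn).mul
          (hDcont.clm_apply continuousOn_const)
      · exact ((continuous_fst.comp continuous_snd).continuousOn).mul
          (hDcont.clm_apply continuousOn_const)
    exact c1.congr fun q hq => by rw [hgdef]; simp only [hp1 q hq, hp2 q hq]
  -- pointwise algebra: cleared bihyperbolic equation
  have h1 : ∀ q ∈ Λ, q.2.1 * q.2.2 * lap3 h q.1 q.2.1 q.2.2
      - α₁ * q.2.2 * pd1 h q.1 q.2.1 q.2.2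
      - α₂ * q.2.1 * pd2 h q.1 q.2.1 q.2.2 = 0 := by
    intro q hq
    obtain ⟨hx1, hx2⟩ := hΛsub q hq
    have hx1' : q.2.1 ≠ 0 := ne_of_gt hx1
    have hx2' : q.2.2 ≠ 0 := ne_of_gt hx2
    have e : q.2.1 * q.2.2 * lap3 h q.1 q.2.1 q.2.2
        - α₁ * q.2.2 * pd1 h q.1 q.2.1 q.2.2
        - α₂ * q.2.1 * pd2 h q.1 q.2.1 q.2.2
        = q.2.1 * q.2.2 * (lap3 h q.1 q.2.1 q.2.2
          - (α₁ / q.2.1) * pd1 h q.1 q.2.1 q.2.2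
          - (α₂ / q.2.2) * pd2 h q.1 q.2.1 q.2.2) := by
      field_simp
    rw [e, hbi q hq, mul_zero]
  constructor
  · intro hax p hp
    have claimA : ∀ q ∈ Λ, α₁ * q.2.2 ^ 2 ≠ α₂ * q.2.1 ^ 2 →
        q.2.2 * pd1 h q.1 q.2.1 q.2.2 = q.2.1 * pd2 h q.1 q.2.1 q.2.2 := by
      intro q hq hne
      have key : (α₁ * q.2.2 ^ 2 - α₂ * q.2.1 ^ 2)
          * (q.2.2 * pd1 h q.1 q.2.1 q.2.2 - q.2.1 * pd2 h q.1 q.2.1 q.2.2) = 0 := by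
        linear_combination q.2.1 * q.2.2 * hax q hq - (q.2.1 ^ 2 + q.2.2 ^ 2) * h1 q hq
      rcases mul_eq_zero.mp key with hk | hk
      · exact absurd (sub_eq_zero.mp hk) hne
      · exact sub_eq_zero.mp hk
    by_cases hc : α₁ * p.2.2 ^ 2 ≠ α₂ * p.2.1 ^ 2
    · exact claimA p hp hc
    · push_neg at hc
      obtain ⟨hx1, hx2⟩ := hΛsub p hp
      have hα₁ : α₁ ≠ 0 := by
        intro h0
        apply hα
        have h2 : α₂ * p.2.1 ^ 2 = 0 := by rw [← hc, h0]; ring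
        have hα₂ : α₂ = 0 := by
          rcases mul_eq_zero.mp h2 with h3 | h3
          · exact h3
          · exact absurd h3 (pow_ne_zero 2 (ne_of_gt hx1))
        simp [h0, hα₂]
      have hγc : Continuous (fun t : ℝ => ((p.1, p.2.1, t) : ℝ × ℝ × ℝ)) := by
        fun_prop
      have hcomp : ContinuousAt (fun t : ℝ => g (p.1, p.2.1, t)) p.2.2 :=
        (hgcont.continuousAt (hΛopen.mem_nhds hp)).comp_of_eq hγc.continuousAt rfl
      have hΛev : ∀ᶠ t in nhds p.2.2, ((p.1, p.2.1, t) : ℝ × ℝ × ℝ) ∈ Λ :=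
        hγc.continuousAt.preimage_mem_nhds (hΛopen.mem_nhds hp)
      have hposev : ∀ᶠ t in nhds p.2.2, 0 < t :=
        (isOpen_Ioi (a := (0 : ℝ))).eventually_mem hx2
      have hev : ∀ᶠ t in nhdsWithin p.2.2 {p.2.2}ᶜ, g (p.1, p.2.1, t) = 0 := by
        filter_upwards [hΛev.filter_mono nhdsWithin_le_nhds,
          hposev.filter_mono nhdsWithin_le_nhds, self_mem_nhdsWithin] with t htΛ htpos htne
        have hne : α₁ * ((p.1, p.2.1, t) : ℝ × ℝ × ℝ).2.2 ^ 2
            ≠ α₂ * ((p.1, p.2.1, t) : ℝ × ℝ × ℝ).2.1 ^ 2 := by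
          simp only
          intro he
          have ht2 : t ^ 2 = p.2.2 ^ 2 := by
            have : α₁ * t ^ 2 = α₁ * p.2.2 ^ 2 := by rw [he, hc]
            exact mul_left_cancel₀ hα₁ this
          have h3 : (t - p.2.2) * (t + p.2.2) = 0 := by linear_combination ht2
          rcases mul_eq_zero.mp h3 with h4 | h4
          · exact htne (by simpa [sub_eq_zero] using h4)
          · have : t = -p.2.2 := by linarith
            linarith
        have := claimA (p.1, p.2.1, t) htΛ hne
        simp only [hgdef]
        simp only at this
        rw [this, sub_self]
      have t1 : Filter.Tendsto (fun t : ℝ => g (p.1, p.2.1, t))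
          (nhdsWithin p.2.2 {p.2.2}ᶜ) (nhds (g p)) := by
        have : g (p.1, p.2.1, p.2.2) = g p := rfl
        exact this ▸ hcomp.tendsto.mono_left nhdsWithin_le_nhds
      have t2 : Filter.Tendsto (fun t : ℝ => g (p.1, p.2.1, t))
          (nhdsWithin p.2.2 {p.2.2}ᶜ) (nhds 0) :=
        Filter.Tendsto.congr' (hev.mono fun t ht => ht.symm) tendsto_const_nhds
      have hg0 : g p = 0 := tendsto_nhds_unique t1 t2
      exact sub_eq_zero.mp hg0
  · intro hsym q hq
    obtain ⟨hx1, hx2⟩ := hΛsub q hq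
    have hx12 : q.2.1 * q.2.2 ≠ 0 := mul_ne_zero (ne_of_gt hx1) (ne_of_gt hx2)
    have h2 : q.2.1 * q.2.2 * ((q.2.1 ^ 2 + q.2.2 ^ 2) * lap3 h q.1 q.2.1 q.2.2
        - (α₁ + α₂) * (q.2.1 * pd1 h q.1 q.2.1 q.2.2
          + q.2.2 * pd2 h q.1 q.2.1 q.2.2)) = 0 := by
      linear_combination (q.2.1 ^ 2 + q.2.2 ^ 2) * h1 q hq
        + (α₁ * q.2.2 ^ 2 - α₂ * q.2.1 ^ 2) * hsym q hq
    exact (mul_eq_zero.mp h2).resolve_left hx12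
end
end

section
/- (Second criterion.) Let α₁, α₂ be real numbers with (α₁,α₂) ≠ (0,0), let Λ ⊆ ℝ³ be an open set contained in {x₁ > 0, x₂ > 0}, and let h : ℝ³ → ℝ be C² on Λ and satisfy the (α₁,α₂)-bihyperbolic equation Δh − (α₁/x₁)∂₁h − (α₂/x₂)∂₂h = 0 throughout Λ. Then h satisfies the (α₁+α₂)-axial-hyperbolic equation (x₁²+x₂²)Δh − (α₁+α₂)(x₁∂₁h + x₂∂₂h) = 0 throughout Λ if and only if for every point (x₀, ρcosθ, ρsinθ) ∈ Λ with ρ > 0, the derivative of the function θ ↦ h(x₀, ρcosθ, ρsinθ) vanishes at θ. -/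
noncomputable section

private lemma key_alg (a1 a2 x1 x2 L p1 p2 : ℝ) (h1 : x1 ≠ 0) (h2 : x2 ≠ 0)
    (hE : L - a1/x1*p1 - a2/x2*p2 = 0) :
    x1*x2*((x1^2+x2^2)*L - (a1+a2)*(x1*p1+x2*p2)) = (a1*x2^2 - a2*x1^2)*(x2*p1 - x1*p2) := by
  have hL : L = a1/x1*p1 + a2/x2*p2 := by linarith
  rw [hL]; field_simp; ring

private lemma clm_decomp (L : (ℝ×ℝ×ℝ) →L[ℝ] ℝ) (a b : ℝ) :
    L ((0:ℝ), -b, a) = a * L (0,0,1) - b * L (0,1,0) := by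
  have hv : ((0:ℝ), -b, a) = a • ((0:ℝ),(0:ℝ),(1:ℝ)) + (-b) • ((0:ℝ),(1:ℝ),(0:ℝ)) := by
    simp [Prod.ext_iff]
  rw [hv, map_add, map_smul, map_smul, smul_eq_mul, smul_eq_mul]; ring

/-- Second criterion: an `(α₁,α₂)`-bihyperbolic harmonic potential on an open set in
`{x₁ > 0, x₂ > 0}` is an `(α₁+α₂)`-axial-hyperbolic harmonic potential if and only if
the angular derivative in cylindrical coordinates vanishes throughout the set. -/
theorem stmt3 (α₁ α₂ : ℝ) (hα : (α₁, α₂) ≠ (0, 0)) (Λ : Set (ℝ × ℝ × ℝ))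
    (hΛopen : IsOpen Λ) (hΛsub : ∀ p ∈ Λ, 0 < p.2.1 ∧ 0 < p.2.2)
    (h : ℝ → ℝ → ℝ → ℝ)
    (hC2 : ContDiffOn ℝ 2 (fun p : ℝ × ℝ × ℝ => h p.1 p.2.1 p.2.2) Λ)
    (hbi : ∀ p ∈ Λ, lap3 h p.1 p.2.1 p.2.2
      - (α₁ / p.2.1) * pd1 h p.1 p.2.1 p.2.2
      - (α₂ / p.2.2) * pd2 h p.1 p.2.1 p.2.2 = 0) :
    (∀ p ∈ Λ, (p.2.1 ^ 2 + p.2.2 ^ 2) * lap3 h p.1 p.2.1 p.2.2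
        - (α₁ + α₂) * (p.2.1 * pd1 h p.1 p.2.1 p.2.2
          + p.2.2 * pd2 h p.1 p.2.1 p.2.2) = 0)
    ↔ (∀ x₀ ρ θ : ℝ, 0 < ρ → (x₀, ρ * Real.cos θ, ρ * Real.sin θ) ∈ Λ →
        deriv (fun t => h x₀ (ρ * Real.cos t) (ρ * Real.sin t)) θ = 0) := by
  classical
  set F : ℝ × ℝ × ℝ → ℝ := fun p => h p.1 p.2.1 p.2.2 with hFdef
  have hdiff : ∀ p ∈ Λ, DifferentiableAt ℝ F p := fun p hp =>
    (hC2.contDiffAt (hΛopen.mem_nhds hp)).differentiableAt (by norm_num)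
  -- identify pd1, pd2 with directional fderivs on Λ
  have hp1 : ∀ p ∈ Λ, pd1 h p.1 p.2.1 p.2.2 = fderiv ℝ F p ((0:ℝ),(1:ℝ),(0:ℝ)) := by
    intro p hp
    have hγ : HasDerivAt (fun t : ℝ => ((p.1, t, p.2.2) : ℝ×ℝ×ℝ)) ((0:ℝ),(1:ℝ),(0:ℝ)) p.2.1 :=
      (hasDerivAt_const _ _).prodMk ((hasDerivAt_id _).prodMk (hasDerivAt_const _ _))
    exact ((hdiff p hp).hasFDerivAt.comp_hasDerivAt p.2.1 hγ).deriv
  have hp2 : ∀ p ∈ Λ, pd2 h p.1 p.2.1 p.2.2 = fderiv ℝ F p ((0:ℝ),(0:ℝ),(1:ℝ)) := by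
    intro p hp
    have hγ : HasDerivAt (fun t : ℝ => ((p.1, p.2.1, t) : ℝ×ℝ×ℝ)) ((0:ℝ),(0:ℝ),(1:ℝ)) p.2.2 :=
      (hasDerivAt_const _ _).prodMk ((hasDerivAt_const _ _).prodMk (hasDerivAt_id _))
    exact ((hdiff p hp).hasFDerivAt.comp_hasDerivAt p.2.2 hγ).deriv
  -- angular derivative
  have hang : ∀ x₀ ρ θ : ℝ, (x₀, ρ * Real.cos θ, ρ * Real.sin θ) ∈ Λ →
      deriv (fun t => h x₀ (ρ * Real.cos t) (ρ * Real.sin t)) θ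
        = fderiv ℝ F (x₀, ρ*Real.cos θ, ρ*Real.sin θ) ((0:ℝ), -(ρ*Real.sin θ), ρ*Real.cos θ) := by
    intro x₀ ρ θ hmem
    have hγ : HasDerivAt (fun t : ℝ => ((x₀, ρ*Real.cos t, ρ*Real.sin t) : ℝ×ℝ×ℝ))
        ((0:ℝ), ρ*(-Real.sin θ), ρ*Real.cos θ) θ :=
      (hasDerivAt_const _ _).prodMk (((Real.hasDerivAt_cos θ).const_mul ρ).prodMk
        ((Real.hasDerivAt_sin θ).const_mul ρ))
    have hd := ((hdiff _ hmem).hasFDerivAt.comp_hasDerivAt θ hγ).deriv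
    have hveq : ((0:ℝ), -(ρ*Real.sin θ), ρ*Real.cos θ)
        = ((0:ℝ), ρ*(-Real.sin θ), ρ*Real.cos θ) := by
      simp [Prod.ext_iff]
    rw [hveq]
    exact hd
  -- continuous "angular gradient" function on Λ
  set g : ℝ×ℝ×ℝ → ℝ := fun q =>
    q.2.1 * fderiv ℝ F q ((0:ℝ),(0:ℝ),(1:ℝ)) - q.2.2 * fderiv ℝ F q ((0:ℝ),(1:ℝ),(0:ℝ))
    with hgdef
  have hf'cont : ContinuousOn (fun q => fderiv ℝ F q) Λ :=
    hC2.continuousOn_fderiv_of_isOpen hΛopen (by norm_num)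
  have hgcont : ContinuousOn g Λ := by
    apply ContinuousOn.sub
    · exact (continuous_snd.fst.continuousOn).mul (hf'cont.clm_apply continuousOn_const)
    · exact (continuous_snd.snd.continuousOn).mul (hf'cont.clm_apply continuousOn_const)
  -- g agrees with the pd expression on Λ
  have hgeq : ∀ p ∈ Λ, g p = p.2.1 * pd2 h p.1 p.2.1 p.2.2 - p.2.2 * pd1 h p.1 p.2.1 p.2.2 := by
    intro p hp; rw [hgdef]; rw [hp1 p hp, hp2 p hp]
  constructor
  · -- axial ⇒ angular derivative vanishes
    intro hax x₀ ρ θ hρ hmem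
    set q : ℝ×ℝ×ℝ := (x₀, ρ*Real.cos θ, ρ*Real.sin θ) with hqdef
    obtain ⟨h1, h2⟩ := hΛsub q hmem
    -- g vanishes off the "degenerate cone"
    have hzero : ∀ r ∈ Λ, α₁*r.2.2^2 - α₂*r.2.1^2 ≠ 0 → g r = 0 := by
      intro r hr hφ
      obtain ⟨hr1, hr2⟩ := hΛsub r hr
      have hkey := key_alg α₁ α₂ r.2.1 r.2.2 (lap3 h r.1 r.2.1 r.2.2)
        (pd1 h r.1 r.2.1 r.2.2) (pd2 h r.1 r.2.1 r.2.2) hr1.ne' hr2.ne' (hbi r hr)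
      rw [hax r hr, mul_zero] at hkey
      have h3 : r.2.2 * pd1 h r.1 r.2.1 r.2.2 - r.2.1 * pd2 h r.1 r.2.1 r.2.2 = 0 := by
        rcases mul_eq_zero.mp hkey.symm with hc | hc
        · exact absurd hc hφ
        · exact hc
      rw [hgeq r hr]; linarith
    have hgq : g q = 0 := by
      by_cases hφ : α₁*q.2.2^2 - α₂*q.2.1^2 ≠ 0
      · exact hzero q hmem hφ
      · push_neg at hφ
        have hα₁ : α₁ ≠ 0 := by
          intro hz
          apply hα
          have : α₂ * q.2.1^2 = 0 := by rw [hz] at hφ; linarith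
          have hα₂ : α₂ = 0 := by
            rcases mul_eq_zero.mp this with hc | hc
            · exact hc
            · exact absurd hc (pow_ne_zero 2 h1.ne')
          rw [hz, hα₂]
        -- approach q along the x₂-direction
        set ψ : ℝ → ℝ×ℝ×ℝ := fun t => (q.1, q.2.1, q.2.2 + t) with hψdef
        have hψcont : Continuous ψ := by
          apply continuous_const.prodMk (continuous_const.prodMk ?_)
          exact continuous_const.add continuous_id
        have hψ0 : ψ 0 = q := by simp [hψdef]
        have hψtend : Filter.Tendsto ψ (nhds 0) (nhds q) := by
          have := hψcont.tendsto 0; rwa [hψ0] at this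
        have hmemev : ∀ᶠ t in nhds (0:ℝ), ψ t ∈ Λ :=
          hψtend (hΛopen.mem_nhds hmem)
        have hsmallev : ∀ᶠ t in nhds (0:ℝ), |t| < 2 * q.2.2 := by
          have : Metric.ball (0:ℝ) (2*q.2.2) ∈ nhds (0:ℝ) :=
            Metric.ball_mem_nhds 0 (by positivity)
          filter_upwards [this] with t ht
          simpa [Real.dist_eq] using ht
        have hgev : ∀ᶠ t in nhdsWithin (0:ℝ) {0}ᶜ, g (ψ t) = 0 := by
          filter_upwards [hmemev.filter_mono nhdsWithin_le_nhds,
            hsmallev.filter_mono nhdsWithin_le_nhds, self_mem_nhdsWithin] with t htΛ hts htne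
          have htne' : t ≠ 0 := htne
          apply hzero _ htΛ
          have hφ' : α₁ * q.2.2^2 = α₂ * q.2.1^2 := by linarith
          have hexp : α₁*(q.2.2+t)^2 - α₂*q.2.1^2 = α₁ * (t * (2*q.2.2 + t)) := by
            linear_combination hφ'
          have hψt2 : (ψ t).2.2 = q.2.2 + t := rfl
          have hψt1 : (ψ t).2.1 = q.2.1 := rfl
          rw [hψt1, hψt2, hexp]
          have hpos : 0 < 2*q.2.2 + t := by
            have h5 := neg_abs_le t
            have hts' : |t| < 2*q.2.2 := hts
            linarith
          exact mul_ne_zero hα₁ (mul_ne_zero htne' (ne_of_gt hpos))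
        have hlim : Filter.Tendsto (g ∘ ψ) (nhdsWithin (0:ℝ) {0}ᶜ) (nhds (g q)) :=
          (Filter.Tendsto.comp (hgcont.continuousAt (hΛopen.mem_nhds hmem)) hψtend).mono_left
            nhdsWithin_le_nhds
        have hlim0 : Filter.Tendsto (g ∘ ψ) (nhdsWithin (0:ℝ) {0}ᶜ) (nhds 0) := by
          apply Filter.Tendsto.congr' _ tendsto_const_nhds
          filter_upwards [hgev] with t ht
          exact ht.symm
        exact (tendsto_nhds_unique hlim hlim0)
    -- conclude: angular derivative equals -g q = 0
    rw [hang x₀ ρ θ hmem]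
    rw [clm_decomp (fderiv ℝ F q) (ρ*Real.cos θ) (ρ*Real.sin θ)]
    have : g q = ρ*Real.cos θ * (fderiv ℝ F q) (0,0,1)
        - ρ*Real.sin θ * (fderiv ℝ F q) (0,1,0) := rfl
    linarith [hgq, this.symm.trans hgq]
  · -- angular derivative vanishes ⇒ axial
    intro hangv p hp
    obtain ⟨h1, h2⟩ := hΛsub p hp
    set x1 := p.2.1 with hx1def
    set x2 := p.2.2 with hx2def
    set ρ := Real.sqrt (x1^2 + x2^2) with hρdef
    have hρ : 0 < ρ := Real.sqrt_pos.mpr (by positivity)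
    set θ := Real.arctan (x2/x1) with hθdef
    have hs : Real.sqrt (1 + (x2/x1)^2) = ρ / x1 := by
      rw [show 1 + (x2/x1)^2 = (x1^2+x2^2)/x1^2 by field_simp]
      rw [Real.sqrt_div (by positivity) _, Real.sqrt_sq h1.le]
    have hcos : ρ * Real.cos θ = x1 := by
      rw [hθdef, Real.cos_arctan, hs]
      field_simp
    have hsin : ρ * Real.sin θ = x2 := by
      rw [hθdef, Real.sin_arctan, hs]
      rw [div_div_div_cancel_right₀]
      · field_simp
      · exact h1.ne'
    have hpeq : (p.1, ρ * Real.cos θ, ρ * Real.sin θ) = p := by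
      rw [hcos, hsin]
    have hmem' : (p.1, ρ * Real.cos θ, ρ * Real.sin θ) ∈ Λ := by rw [hpeq]; exact hp
    have h0 := hangv p.1 ρ θ hρ hmem'
    rw [hang p.1 ρ θ hmem'] at h0
    rw [clm_decomp] at h0
    rw [hpeq, hcos, hsin] at h0
    rw [← hp1 p hp, ← hp2 p hp] at h0
    -- h0 : x1 * pd2 - x2 * pd1 = 0
    have hkey := key_alg α₁ α₂ x1 x2 (lap3 h p.1 x1 x2)
      (pd1 h p.1 x1 x2) (pd2 h p.1 x1 x2) h1.ne' h2.ne' (hbi p hp)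
    have hz : x2 * pd1 h p.1 x1 x2 - x1 * pd2 h p.1 x1 x2 = 0 := by linarith
    rw [hz, mul_zero] at hkey
    rcases mul_eq_zero.mp hkey with hc | hc
    · rcases mul_eq_zero.mp hc with hc' | hc'
      · exact absurd hc' h1.ne'
      · exact absurd hc' h2.ne'
    · exact hc
end
end

section
/- Let α₁, α₂ be real, let h : ℝ³ → ℝ be twice continuously differentiable near a point (x₀, ρcosθ, ρsinθ) with ρ > 0, cosθ ≠ 0 and sinθ ≠ 0, and define g(x₀, ρ, θ) = h(x₀, ρcosθ, ρsinθ). Then h satisfies the (α₁,α₂)-bihyperbolic equation Δh − (α₁/x₁)∂₁h − (α₂/x₂)∂₂h = 0 at (x₀, ρcosθ, ρsinθ) if and only if ρ²(∂²g/∂x₀² + ∂²g/∂ρ²) − (α₁+α₂−1)ρ·∂g/∂ρ + ∂²g/∂θ² + (α₁tanθ − α₂cotθ)·∂g/∂θ = 0 at (x₀, ρ, θ). -/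
noncomputable section

set_option maxHeartbeats 4000000 in
/-- The `(α₁,α₂)`-bihyperbolic equation in Cartesian coordinates is equivalent to
`ρ²(∂²g/∂x₀² + ∂²g/∂ρ²) − (α₁+α₂−1)ρ ∂g/∂ρ + ∂²g/∂θ² + (α₁ tan θ − α₂ cot θ) ∂g/∂θ = 0`
in cylindrical coordinates. -/
theorem stmt5 (α₁ α₂ : ℝ) (h g : ℝ → ℝ → ℝ → ℝ) (x₀ ρ θ : ℝ) (hρ : 0 < ρ)
    (hcos : Real.cos θ ≠ 0) (hsin : Real.sin θ ≠ 0)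
    (hC2 : ContDiffAt ℝ 2 (fun p : ℝ × ℝ × ℝ => h p.1 p.2.1 p.2.2)
      (x₀, ρ * Real.cos θ, ρ * Real.sin θ))
    (hg : ∀ a r t, g a r t = h a (r * Real.cos t) (r * Real.sin t)) :
    lap3 h x₀ (ρ * Real.cos θ) (ρ * Real.sin θ)
      - (α₁ / (ρ * Real.cos θ)) * pd1 h x₀ (ρ * Real.cos θ) (ρ * Real.sin θ)
      - (α₂ / (ρ * Real.sin θ)) * pd2 h x₀ (ρ * Real.cos θ) (ρ * Real.sin θ) = 0
    ↔ ρ ^ 2 * (pd0 (pd0 g) x₀ ρ θ + pd1 (pd1 g) x₀ ρ θ)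
      - (α₁ + α₂ - 1) * ρ * pd1 g x₀ ρ θ + pd2 (pd2 g) x₀ ρ θ
      + (α₁ * Real.tan θ - α₂ * Real.cot θ) * pd2 g x₀ ρ θ = 0 := by
  have hρ' : ρ ≠ 0 := ne_of_gt hρ
  set c := Real.cos θ with hc
  set s := Real.sin θ with hs
  set H : ℝ × ℝ × ℝ → ℝ := fun p => h p.1 p.2.1 p.2.2 with hHdef
  -- obtain open neighborhood of P on which H is C²
  obtain ⟨u0, hu0, hHu0⟩ : ∃ u ∈ nhds ((x₀, ρ * c, ρ * s) : ℝ × ℝ × ℝ), ContDiffOn ℝ 2 H u :=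
    hC2.contDiffOn (m := 2) le_rfl (by simp)
  rcases mem_nhds_iff.1 hu0 with ⟨u, hu_sub, hu_open, hPu⟩
  have hHu : ContDiffOn ℝ 2 H u := hHu0.mono hu_sub
  set f' : ℝ × ℝ × ℝ → (ℝ × ℝ × ℝ) →L[ℝ] ℝ := fderiv ℝ H with hf'def
  have hdiff : ∀ q ∈ u, HasFDerivAt H (f' q) q := fun q hq =>
    ((hHu.contDiffAt (hu_open.mem_nhds hq)).differentiableAt two_ne_zero).hasFDerivAt
  have hf'C1 : ContDiffOn ℝ 1 f' u := hHu.fderiv_of_isOpen hu_open le_rfl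
  set f'' : (ℝ × ℝ × ℝ) →L[ℝ] (ℝ × ℝ × ℝ) →L[ℝ] ℝ :=
    fderiv ℝ f' (x₀, ρ * c, ρ * s) with hf''def
  have hf'' : HasFDerivAt f' f'' (x₀, ρ * c, ρ * s) :=
    ((hf'C1.contDiffAt (hu_open.mem_nhds hPu)).differentiableAt one_ne_zero).hasFDerivAt
  have hsymm : ∀ v w, f'' v w = f'' w v := fun v w =>
    second_derivative_symmetric_of_eventually
      (by filter_upwards [hu_open.mem_nhds hPu] with y hy using hdiff y hy) hf'' v w
  -- line derivatives of h in each coordinate, at any point of u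
  have line0 : ∀ a b c', ((a, b, c') : ℝ × ℝ × ℝ) ∈ u →
      HasDerivAt (fun t => h t b c') (f' (a, b, c') (1, 0, 0)) a := by
    intro a b c' hq
    have hγ : HasDerivAt (fun t : ℝ => ((t, b, c') : ℝ × ℝ × ℝ)) ((1:ℝ), (0:ℝ), (0:ℝ)) a :=
      (hasDerivAt_id a).prodMk ((hasDerivAt_const a b).prodMk (hasDerivAt_const a c'))
    simpa [Function.comp_def, hHdef] using (hdiff _ hq).comp_hasDerivAt a hγ
  have line1 : ∀ a b c', ((a, b, c') : ℝ × ℝ × ℝ) ∈ u →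
      HasDerivAt (fun t => h a t c') (f' (a, b, c') (0, 1, 0)) b := by
    intro a b c' hq
    have hγ : HasDerivAt (fun t : ℝ => ((a, t, c') : ℝ × ℝ × ℝ)) ((0:ℝ), (1:ℝ), (0:ℝ)) b :=
      (hasDerivAt_const b a).prodMk ((hasDerivAt_id b).prodMk (hasDerivAt_const b c'))
    simpa [Function.comp_def, hHdef] using (hdiff _ hq).comp_hasDerivAt b hγ
  have line2 : ∀ a b c', ((a, b, c') : ℝ × ℝ × ℝ) ∈ u →
      HasDerivAt (fun t => h a b t) (f' (a, b, c') (0, 0, 1)) c' := by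
    intro a b c' hq
    have hγ : HasDerivAt (fun t : ℝ => ((a, b, t) : ℝ × ℝ × ℝ)) ((0:ℝ), (0:ℝ), (1:ℝ)) c' :=
      (hasDerivAt_const c' a).prodMk ((hasDerivAt_const c' b).prodMk (hasDerivAt_id c'))
    simpa [Function.comp_def, hHdef] using (hdiff _ hq).comp_hasDerivAt c' hγ
  -- first partials of h at points of u
  have pd0h : ∀ a b c', ((a, b, c') : ℝ × ℝ × ℝ) ∈ u → pd0 h a b c' = f' (a, b, c') (1, 0, 0) :=
    fun a b c' hq => (line0 a b c' hq).deriv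
  have pd1h : ∀ a b c', ((a, b, c') : ℝ × ℝ × ℝ) ∈ u → pd1 h a b c' = f' (a, b, c') (0, 1, 0) :=
    fun a b c' hq => (line1 a b c' hq).deriv
  have pd2h : ∀ a b c', ((a, b, c') : ℝ × ℝ × ℝ) ∈ u → pd2 h a b c' = f' (a, b, c') (0, 0, 1) :=
    fun a b c' hq => (line2 a b c' hq).deriv
  -- second partials of h at P
  have hmem0 : ∀ᶠ t in nhds x₀, ((t, ρ * c, ρ * s) : ℝ × ℝ × ℝ) ∈ u := by
    have hcont : ContinuousAt (fun t : ℝ => ((t, ρ * c, ρ * s) : ℝ × ℝ × ℝ)) x₀ := by fun_prop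
    exact hcont.eventually_mem (hu_open.mem_nhds hPu)
  have hmem1 : ∀ᶠ t in nhds (ρ * c), ((x₀, t, ρ * s) : ℝ × ℝ × ℝ) ∈ u := by
    have hcont : ContinuousAt (fun t : ℝ => ((x₀, t, ρ * s) : ℝ × ℝ × ℝ)) (ρ * c) := by fun_prop
    exact hcont.eventually_mem (hu_open.mem_nhds hPu)
  have hmem2 : ∀ᶠ t in nhds (ρ * s), ((x₀, ρ * c, t) : ℝ × ℝ × ℝ) ∈ u := by
    have hcont : ContinuousAt (fun t : ℝ => ((x₀, ρ * c, t) : ℝ × ℝ × ℝ)) (ρ * s) := by fun_prop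
    exact hcont.eventually_mem (hu_open.mem_nhds hPu)
  have hpd00h : pd0 (pd0 h) x₀ (ρ * c) (ρ * s) = f'' (1, 0, 0) (1, 0, 0) := by
    have hγ : HasDerivAt (fun t : ℝ => ((t, ρ * c, ρ * s) : ℝ × ℝ × ℝ)) ((1:ℝ), (0:ℝ), (0:ℝ)) x₀ :=
      (hasDerivAt_id x₀).prodMk ((hasDerivAt_const _ _).prodMk (hasDerivAt_const _ _))
    have hA : HasDerivAt (fun t => f' (t, ρ * c, ρ * s) ((1:ℝ), (0:ℝ), (0:ℝ)))
        (f'' (1, 0, 0) (1, 0, 0)) x₀ := by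
      simpa using (hf''.comp_hasDerivAt x₀ hγ).clm_apply (hasDerivAt_const x₀ ((1:ℝ),(0:ℝ),(0:ℝ)))
    have heq : (fun t => pd0 h t (ρ * c) (ρ * s))
        =ᶠ[nhds x₀] (fun t => f' (t, ρ * c, ρ * s) (1, 0, 0)) :=
      hmem0.mono fun t ht => pd0h _ _ _ ht
    show deriv (fun t => pd0 h t (ρ * c) (ρ * s)) x₀ = _
    rw [heq.deriv_eq]; exact hA.deriv
  have hpd11h : pd1 (pd1 h) x₀ (ρ * c) (ρ * s) = f'' (0, 1, 0) (0, 1, 0) := by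
    have hγ : HasDerivAt (fun t : ℝ => ((x₀, t, ρ * s) : ℝ × ℝ × ℝ)) ((0:ℝ), (1:ℝ), (0:ℝ)) (ρ * c) :=
      (hasDerivAt_const _ _).prodMk ((hasDerivAt_id _).prodMk (hasDerivAt_const _ _))
    have hA : HasDerivAt (fun t => f' (x₀, t, ρ * s) ((0:ℝ), (1:ℝ), (0:ℝ)))
        (f'' (0, 1, 0) (0, 1, 0)) (ρ * c) := by
      simpa using (hf''.comp_hasDerivAt (ρ * c) hγ).clm_apply
        (hasDerivAt_const (ρ * c) ((0:ℝ),(1:ℝ),(0:ℝ)))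
    have heq : (fun t => pd1 h x₀ t (ρ * s))
        =ᶠ[nhds (ρ * c)] (fun t => f' (x₀, t, ρ * s) (0, 1, 0)) :=
      hmem1.mono fun t ht => pd1h _ _ _ ht
    show deriv (fun t => pd1 h x₀ t (ρ * s)) (ρ * c) = _
    rw [heq.deriv_eq]; exact hA.deriv
  have hpd22h : pd2 (pd2 h) x₀ (ρ * c) (ρ * s) = f'' (0, 0, 1) (0, 0, 1) := by
    have hγ : HasDerivAt (fun t : ℝ => ((x₀, ρ * c, t) : ℝ × ℝ × ℝ)) ((0:ℝ), (0:ℝ), (1:ℝ)) (ρ * s) :=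
      (hasDerivAt_const _ _).prodMk ((hasDerivAt_const _ _).prodMk (hasDerivAt_id _))
    have hA : HasDerivAt (fun t => f' (x₀, ρ * c, t) ((0:ℝ), (0:ℝ), (1:ℝ)))
        (f'' (0, 0, 1) (0, 0, 1)) (ρ * s) := by
      simpa using (hf''.comp_hasDerivAt (ρ * s) hγ).clm_apply
        (hasDerivAt_const (ρ * s) ((0:ℝ),(0:ℝ),(1:ℝ)))
    have heq : (fun t => pd2 h x₀ (ρ * c) t)
        =ᶠ[nhds (ρ * s)] (fun t => f' (x₀, ρ * c, t) (0, 0, 1)) :=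
      hmem2.mono fun t ht => pd2h _ _ _ ht
    show deriv (fun t => pd2 h x₀ (ρ * c) t) (ρ * s) = _
    rw [heq.deriv_eq]; exact hA.deriv
  -- g: radial derivative
  have gr : ∀ r, ((x₀, r * c, r * s) : ℝ × ℝ × ℝ) ∈ u →
      HasDerivAt (fun r' => g x₀ r' θ) (f' (x₀, r * c, r * s) (0, c, s)) r := by
    intro r hr
    have hγ : HasDerivAt (fun r' : ℝ => ((x₀, r' * c, r' * s) : ℝ × ℝ × ℝ)) ((0:ℝ), c, s) r :=
      (hasDerivAt_const r x₀).prodMk ((hasDerivAt_mul_const c).prodMk (hasDerivAt_mul_const s))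
    have := (hdiff _ hr).comp_hasDerivAt r hγ
    have hfun : (fun r' : ℝ => g x₀ r' θ) = fun r' => H (x₀, r' * c, r' * s) := by
      funext r'; simp [hg, hHdef, hc, hs]
    rw [hfun]
    simpa [Function.comp_def] using this
  have pd1g : ∀ r, ((x₀, r * c, r * s) : ℝ × ℝ × ℝ) ∈ u →
      pd1 g x₀ r θ = f' (x₀, r * c, r * s) (0, c, s) := fun r hr => (gr r hr).deriv
  have hmemr : ∀ᶠ r in nhds ρ, ((x₀, r * c, r * s) : ℝ × ℝ × ℝ) ∈ u := by
    have hcont : ContinuousAt (fun r : ℝ => ((x₀, r * c, r * s) : ℝ × ℝ × ℝ)) ρ := by fun_prop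
    exact hcont.eventually_mem (hu_open.mem_nhds hPu)
  have hpd11g : pd1 (pd1 g) x₀ ρ θ = f'' (0, c, s) (0, c, s) := by
    have hγ : HasDerivAt (fun r' : ℝ => ((x₀, r' * c, r' * s) : ℝ × ℝ × ℝ)) ((0:ℝ), c, s) ρ :=
      (hasDerivAt_const ρ x₀).prodMk ((hasDerivAt_mul_const c).prodMk (hasDerivAt_mul_const s))
    have hA : HasDerivAt (fun r => f' (x₀, r * c, r * s) ((0:ℝ), c, s))
        (f'' (0, c, s) (0, c, s)) ρ := by
      simpa using (hf''.comp_hasDerivAt ρ hγ).clm_apply (hasDerivAt_const ρ ((0:ℝ), c, s))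
    have heq : (fun r => pd1 g x₀ r θ) =ᶠ[nhds ρ] (fun r => f' (x₀, r * c, r * s) (0, c, s)) :=
      hmemr.mono fun r hr => pd1g r hr
    show deriv (fun r => pd1 g x₀ r θ) ρ = _
    rw [heq.deriv_eq]; exact hA.deriv
  -- g: x₀ derivative
  have g0 : ∀ a, ((a, ρ * c, ρ * s) : ℝ × ℝ × ℝ) ∈ u →
      HasDerivAt (fun a' => g a' ρ θ) (f' (a, ρ * c, ρ * s) (1, 0, 0)) a := by
    intro a ha
    have hfun : (fun a' : ℝ => g a' ρ θ) = fun a' => h a' (ρ * c) (ρ * s) := by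
      funext a'; simp [hg, hc, hs]
    rw [hfun]; exact line0 a _ _ ha
  have hpd00g : pd0 (pd0 g) x₀ ρ θ = f'' (1, 0, 0) (1, 0, 0) := by
    have hγ : HasDerivAt (fun t : ℝ => ((t, ρ * c, ρ * s) : ℝ × ℝ × ℝ)) ((1:ℝ), (0:ℝ), (0:ℝ)) x₀ :=
      (hasDerivAt_id x₀).prodMk ((hasDerivAt_const _ _).prodMk (hasDerivAt_const _ _))
    have hA : HasDerivAt (fun t => f' (t, ρ * c, ρ * s) ((1:ℝ), (0:ℝ), (0:ℝ)))
        (f'' (1, 0, 0) (1, 0, 0)) x₀ := by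
      simpa using (hf''.comp_hasDerivAt x₀ hγ).clm_apply (hasDerivAt_const x₀ ((1:ℝ),(0:ℝ),(0:ℝ)))
    have heq : (fun a => pd0 g a ρ θ)
        =ᶠ[nhds x₀] (fun a => f' (a, ρ * c, ρ * s) (1, 0, 0)) :=
      hmem0.mono fun a ha => (g0 a ha).deriv
    show deriv (fun a => pd0 g a ρ θ) x₀ = _
    rw [heq.deriv_eq]; exact hA.deriv
  -- g: angular derivative
  have gt : ∀ t, ((x₀, ρ * Real.cos t, ρ * Real.sin t) : ℝ × ℝ × ℝ) ∈ u →
      HasDerivAt (fun t' => g x₀ ρ t')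
        (f' (x₀, ρ * Real.cos t, ρ * Real.sin t) (0, ρ * -Real.sin t, ρ * Real.cos t)) t := by
    intro t ht
    have hγ : HasDerivAt (fun t' : ℝ => ((x₀, ρ * Real.cos t', ρ * Real.sin t') : ℝ × ℝ × ℝ))
        ((0:ℝ), ρ * -Real.sin t, ρ * Real.cos t) t :=
      (hasDerivAt_const t x₀).prodMk
        (((Real.hasDerivAt_cos t).const_mul ρ).prodMk ((Real.hasDerivAt_sin t).const_mul ρ))
    have := (hdiff _ ht).comp_hasDerivAt t hγ
    have hfun : (fun t' : ℝ => g x₀ ρ t') = fun t' => H (x₀, ρ * Real.cos t', ρ * Real.sin t') := by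
      funext t'; simp [hg, hHdef]
    rw [hfun]
    simpa [Function.comp_def] using this
  have pd2g : ∀ t, ((x₀, ρ * Real.cos t, ρ * Real.sin t) : ℝ × ℝ × ℝ) ∈ u →
      pd2 g x₀ ρ t = f' (x₀, ρ * Real.cos t, ρ * Real.sin t) (0, ρ * -Real.sin t, ρ * Real.cos t) :=
    fun t ht => (gt t ht).deriv
  have hmemt : ∀ᶠ t in nhds θ, ((x₀, ρ * Real.cos t, ρ * Real.sin t) : ℝ × ℝ × ℝ) ∈ u := by
    have hcont : ContinuousAt (fun t : ℝ => ((x₀, ρ * Real.cos t, ρ * Real.sin t) : ℝ × ℝ × ℝ)) θ := by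
      fun_prop
    have hPu' : ((x₀, ρ * Real.cos θ, ρ * Real.sin θ) : ℝ × ℝ × ℝ) ∈ u := by
      rw [← hc, ← hs]; exact hPu
    exact hcont.eventually_mem (hu_open.mem_nhds hPu')
  have hpd22g : pd2 (pd2 g) x₀ ρ θ
      = f'' (0, ρ * -s, ρ * c) (0, ρ * -s, ρ * c)
        + f' (x₀, ρ * c, ρ * s) (0, ρ * -c, ρ * -s) := by
    have hγ : HasDerivAt (fun t' : ℝ => ((x₀, ρ * Real.cos t', ρ * Real.sin t') : ℝ × ℝ × ℝ))
        ((0:ℝ), ρ * -Real.sin θ, ρ * Real.cos θ) θ :=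
      (hasDerivAt_const θ x₀).prodMk
        (((Real.hasDerivAt_cos θ).const_mul ρ).prodMk ((Real.hasDerivAt_sin θ).const_mul ρ))
    have hγP : HasFDerivAt f' f'' ((x₀, ρ * Real.cos θ, ρ * Real.sin θ) : ℝ × ℝ × ℝ) := by
      rw [← hc, ← hs]; exact hf''
    have hv : HasDerivAt (fun t' : ℝ => ((0:ℝ), ρ * -Real.sin t', ρ * Real.cos t'))
        ((0:ℝ), ρ * -Real.cos θ, ρ * -Real.sin θ) θ :=
      (hasDerivAt_const θ (0:ℝ)).prodMk
        ((((Real.hasDerivAt_sin θ).neg).const_mul ρ).prodMk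
          (((Real.hasDerivAt_cos θ).const_mul ρ)))
    have hA : HasDerivAt
        (fun t => f' (x₀, ρ * Real.cos t, ρ * Real.sin t) ((0:ℝ), ρ * -Real.sin t, ρ * Real.cos t))
        (f'' (0, ρ * -Real.sin θ, ρ * Real.cos θ) (0, ρ * -Real.sin θ, ρ * Real.cos θ)
          + f' (x₀, ρ * Real.cos θ, ρ * Real.sin θ) (0, ρ * -Real.cos θ, ρ * -Real.sin θ)) θ :=
      (hγP.comp_hasDerivAt θ hγ).clm_apply hv
    have heq : (fun t => pd2 g x₀ ρ t) =ᶠ[nhds θ]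
        (fun t => f' (x₀, ρ * Real.cos t, ρ * Real.sin t) (0, ρ * -Real.sin t, ρ * Real.cos t)) :=
      hmemt.mono fun t ht => pd2g t ht
    show deriv (fun t => pd2 g x₀ ρ t) θ = _
    rw [heq.deriv_eq, hA.deriv, ← hc, ← hs]
  have hpd2gθ : pd2 g x₀ ρ θ = f' (x₀, ρ * c, ρ * s) (0, ρ * -s, ρ * c) := by
    have := pd2g θ (by rw [← hc, ← hs]; exact hPu)
    rw [this, ← hc, ← hs]
  have hpd1gθ : pd1 g x₀ ρ θ = f' (x₀, ρ * c, ρ * s) (0, c, s) := pd1g ρ hPu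
  have hpd1hP : pd1 h x₀ (ρ * c) (ρ * s) = f' (x₀, ρ * c, ρ * s) (0, 1, 0) := pd1h _ _ _ hPu
  have hpd2hP : pd2 h x₀ (ρ * c) (ρ * s) = f' (x₀, ρ * c, ρ * s) (0, 0, 1) := pd2h _ _ _ hPu
  -- abbreviations and bilinear expansions
  set P1 := f' (x₀, ρ * c, ρ * s) (0, 1, 0) with hP1
  set P2 := f' (x₀, ρ * c, ρ * s) (0, 0, 1) with hP2
  set B00 := f'' (1, 0, 0) (1, 0, 0) with hB00
  set B11 := f'' (0, 1, 0) (0, 1, 0) with hB11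
  set B22 := f'' (0, 0, 1) (0, 0, 1) with hB22
  set B12 := f'' (0, 1, 0) (0, 0, 1) with hB12
  have hsym12 : f'' (0, 0, 1) (0, 1, 0) = B12 := (hsymm _ _)
  have hw : ∀ x y : ℝ, ((0:ℝ), x, y) = x • ((0:ℝ),(1:ℝ),(0:ℝ)) + y • ((0:ℝ),(0:ℝ),(1:ℝ)) := by
    intro x y; simp [Prod.ext_iff]
  have expf' : ∀ x y : ℝ, f' (x₀, ρ * c, ρ * s) (0, x, y) = x * P1 + y * P2 := by
    intro x y
    rw [hw]
    simp only [map_add, map_smul, ContinuousLinearMap.add_apply,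
      ContinuousLinearMap.smul_apply, smul_eq_mul, hP1, hP2]
  have expf'' : ∀ x y : ℝ, f'' (0, x, y) (0, x, y)
      = x * x * B11 + x * y * B12 + y * x * B12 + y * y * B22 := by
    intro x y
    rw [hw]
    simp only [map_add, map_smul, ContinuousLinearMap.add_apply,
      ContinuousLinearMap.smul_apply, smul_eq_mul, ← hB11, ← hB22, ← hB12]
    rw [hsym12]
    ring
  -- rewrite everything
  simp only [lap3]
  rw [hpd00h, hpd11h, hpd22h, hpd1hP, hpd2hP, hpd00g, hpd11g, hpd22g, hpd1gθ, hpd2gθ,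
    expf' c s, expf' (ρ * -c) (ρ * -s), expf' (ρ * -s) (ρ * c),
    expf'' c s, expf'' (ρ * -s) (ρ * c)]
  have hpy : c ^ 2 + s ^ 2 = 1 := by rw [hc, hs]; exact Real.cos_sq_add_sin_sq θ
  have htan : Real.tan θ = s / c := by rw [hc, hs]; exact Real.tan_eq_sin_div_cos θ
  have hcot : Real.cot θ = c / s := by rw [hc, hs]; exact Real.cot_eq_cos_div_sin θ
  rw [htan, hcot]
  have hcne : c ≠ 0 := by rw [hc]; exact hcos
  have hsne : s ≠ 0 := by rw [hs]; exact hsin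
  clear_value c s H f' f'' P1 P2 B00 B11 B22 B12
  have key : ρ ^ 2 * (B00 + (c * c * B11 + c * s * B12 + s * c * B12 + s * s * B22))
      - (α₁ + α₂ - 1) * ρ * (c * P1 + s * P2)
      + (ρ * -s * (ρ * -s) * B11 + ρ * -s * (ρ * c) * B12 + ρ * c * (ρ * -s) * B12
          + ρ * c * (ρ * c) * B22 + (ρ * -c * P1 + ρ * -s * P2))
      + (α₁ * (s / c) - α₂ * (c / s)) * (ρ * -s * P1 + ρ * c * P2)
      = ρ ^ 2 * (B00 + B11 + B22 - α₁ / (ρ * c) * P1 - α₂ / (ρ * s) * P2) := by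
    field_simp
    linear_combination (c*s*ρ*(B11 + B22) - s*α₁*P1 - c*α₂*P2) * hpy
  rw [key, mul_eq_zero]
  simp [pow_eq_zero_iff, hρ']
end
end

section
/- Let α be real and let g : ℝ² → ℝ be twice continuously differentiable on an open set U ⊆ ℝ × (0,∞) and satisfy the elliptic Euler–Poisson–Darboux equation ρ(∂²g/∂x₀² + ∂²g/∂ρ²) − (α−1)∂g/∂ρ = 0 on U. Define h : ℝ³ → ℝ by h(x₀, x₁, x₂) = g(x₀, √(x₁²+x₂²)). Then at every point (x₀, x₁, x₂) with (x₀, √(x₁²+x₂²)) ∈ U: (i) h satisfies the α-axial-hyperbolic equation (x₁²+x₂²)Δh − α(x₁∂₁h + x₂∂₂h) = 0; and (ii) for any real α₁, α₂ with α₁ + α₂ = α and x₁ ≠ 0, x₂ ≠ 0, h satisfies the (α₁,α₂)-bihyperbolic equation Δh − (α₁/x₁)∂₁h − (α₂/x₂)∂₂h = 0. -/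
noncomputable section

/-- Partial derivative of `g : ℝ → ℝ → ℝ` in the first variable (`x₀`). -/
def qd0 (g : ℝ → ℝ → ℝ) (a r : ℝ) : ℝ := deriv (fun t => g t r) a

/-- Partial derivative of `g : ℝ → ℝ → ℝ` in the second variable (`ρ`). -/
def qd1 (g : ℝ → ℝ → ℝ) (a r : ℝ) : ℝ := deriv (fun t => g a t) r

/-- A solution of the elliptic Euler–Poisson–Darboux equation gives rise, via
`h(x₀,x₁,x₂) = g(x₀,√(x₁²+x₂²))`, to an `α`-axial-hyperbolic harmonic potential which,
for every splitting `α = α₁ + α₂`, is also `(α₁,α₂)`-bihyperbolic harmonic. -/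
theorem stmt8 (α : ℝ) (g : ℝ → ℝ → ℝ) (U : Set (ℝ × ℝ))
    (hUopen : IsOpen U) (hUsub : ∀ q ∈ U, 0 < q.2)
    (hC2 : ContDiffOn ℝ 2 (fun q : ℝ × ℝ => g q.1 q.2) U)
    (hEPD : ∀ q ∈ U, q.2 * (qd0 (qd0 g) q.1 q.2 + qd1 (qd1 g) q.1 q.2)
      - (α - 1) * qd1 g q.1 q.2 = 0)
    (h : ℝ → ℝ → ℝ → ℝ)
    (hh : ∀ a b c, h a b c = g a (Real.sqrt (b ^ 2 + c ^ 2))) :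
    ∀ x₀ x₁ x₂ : ℝ, (x₀, Real.sqrt (x₁ ^ 2 + x₂ ^ 2)) ∈ U →
      ((x₁ ^ 2 + x₂ ^ 2) * lap3 h x₀ x₁ x₂
        - α * (x₁ * pd1 h x₀ x₁ x₂ + x₂ * pd2 h x₀ x₁ x₂) = 0)
      ∧ (∀ α₁ α₂ : ℝ, α₁ + α₂ = α → x₁ ≠ 0 → x₂ ≠ 0 →
          lap3 h x₀ x₁ x₂ - (α₁ / x₁) * pd1 h x₀ x₁ x₂
            - (α₂ / x₂) * pd2 h x₀ x₁ x₂ = 0) := by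
  set G : ℝ × ℝ → ℝ := fun q => g q.1 q.2 with hG
  have hC2at : ∀ q ∈ U, ContDiffAt ℝ 2 G q := fun q hq => hC2.contDiffAt (hUopen.mem_nhds hq)
  have hGdiff : ∀ q ∈ U, DifferentiableAt ℝ G q :=
    fun q hq => (hC2at q hq).differentiableAt (by norm_num)
  set G1 : ℝ × ℝ → ℝ := fun q => fderiv ℝ G q (0, 1) with hG1
  have hG1diff : ∀ q ∈ U, DifferentiableAt ℝ G1 q := by
    intro q hq
    have := ((hC2at q hq).fderiv_right (m := 1) (by norm_num)).differentiableAt one_ne_zero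
    exact this.clm_apply (differentiableAt_const _)
  have hqd1 : ∀ a s : ℝ, (a, s) ∈ U → qd1 g a s = G1 (a, s) := by
    intro a s hq
    have hcurve : HasDerivAt (fun t : ℝ => ((a, t) : ℝ × ℝ)) ((0 : ℝ), (1 : ℝ)) s :=
      (hasDerivAt_const s a).prodMk (hasDerivAt_id s)
    exact ((hGdiff _ hq).hasFDerivAt.comp_hasDerivAt s hcurve).deriv
  -- general first partials of h
  have hpd1 : ∀ b c : ℝ, (x₀ : ℝ) → ((x₀, Real.sqrt (b ^ 2 + c ^ 2)) ∈ U) →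
      pd1 h x₀ b c = G1 (x₀, Real.sqrt (b ^ 2 + c ^ 2)) * (b / Real.sqrt (b ^ 2 + c ^ 2)) := by
    intro b c x₀ hq
    have hspos : 0 < Real.sqrt (b ^ 2 + c ^ 2) := hUsub _ hq
    have hbc : b ^ 2 + c ^ 2 ≠ 0 := by
      intro h0; rw [h0, Real.sqrt_zero] at hspos; exact lt_irrefl 0 hspos
    have hsq : HasDerivAt (fun t : ℝ => Real.sqrt (t ^ 2 + c ^ 2))
        (b / Real.sqrt (b ^ 2 + c ^ 2)) b := by
      have h1 : HasDerivAt (fun t : ℝ => t ^ 2 + c ^ 2) (2 * b) b := by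
        simpa using (hasDerivAt_pow 2 b).add_const (c ^ 2)
      have := h1.sqrt hbc
      convert this using 1
      field_simp
    have hcurve : HasDerivAt (fun t : ℝ => ((x₀, Real.sqrt (t ^ 2 + c ^ 2)) : ℝ × ℝ))
        ((0 : ℝ), b / Real.sqrt (b ^ 2 + c ^ 2)) b :=
      (hasDerivAt_const b x₀).prodMk hsq
    have hcomp := (hGdiff _ hq).hasFDerivAt.comp_hasDerivAt b hcurve
    have h1 : pd1 h x₀ b c
        = fderiv ℝ G (x₀, Real.sqrt (b ^ 2 + c ^ 2)) (0, b / Real.sqrt (b ^ 2 + c ^ 2)) := by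
      have hfun : (fun t => h x₀ t c) = fun t => G (x₀, Real.sqrt (t ^ 2 + c ^ 2)) := by
        funext t; exact hh x₀ t c
      rw [pd1, hfun]
      exact hcomp.deriv
    rw [h1]
    have h2 : ((0 : ℝ), b / Real.sqrt (b ^ 2 + c ^ 2))
        = (b / Real.sqrt (b ^ 2 + c ^ 2)) • ((0 : ℝ), (1 : ℝ)) := by simp
    rw [h2, map_smul, smul_eq_mul, mul_comm]
  have hpd2 : ∀ b c : ℝ, (x₀ : ℝ) → ((x₀, Real.sqrt (b ^ 2 + c ^ 2)) ∈ U) →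
      pd2 h x₀ b c = G1 (x₀, Real.sqrt (b ^ 2 + c ^ 2)) * (c / Real.sqrt (b ^ 2 + c ^ 2)) := by
    intro b c x₀ hq
    have hspos : 0 < Real.sqrt (b ^ 2 + c ^ 2) := hUsub _ hq
    have hbc : b ^ 2 + c ^ 2 ≠ 0 := by
      intro h0; rw [h0, Real.sqrt_zero] at hspos; exact lt_irrefl 0 hspos
    have hsq : HasDerivAt (fun t : ℝ => Real.sqrt (b ^ 2 + t ^ 2))
        (c / Real.sqrt (b ^ 2 + c ^ 2)) c := by
      have h1 : HasDerivAt (fun t : ℝ => b ^ 2 + t ^ 2) (2 * c) c := by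
        simpa using (hasDerivAt_pow 2 c).const_add (b ^ 2)
      have := h1.sqrt hbc
      convert this using 1
      field_simp
    have hcurve : HasDerivAt (fun t : ℝ => ((x₀, Real.sqrt (b ^ 2 + t ^ 2)) : ℝ × ℝ))
        ((0 : ℝ), c / Real.sqrt (b ^ 2 + c ^ 2)) c :=
      (hasDerivAt_const c x₀).prodMk hsq
    have hcomp := (hGdiff _ hq).hasFDerivAt.comp_hasDerivAt c hcurve
    have h1 : pd2 h x₀ b c
        = fderiv ℝ G (x₀, Real.sqrt (b ^ 2 + c ^ 2)) (0, c / Real.sqrt (b ^ 2 + c ^ 2)) := by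
      have hfun : (fun t => h x₀ b t) = fun t => G (x₀, Real.sqrt (b ^ 2 + t ^ 2)) := by
        funext t; exact hh x₀ b t
      rw [pd2, hfun]
      exact hcomp.deriv
    rw [h1]
    have h2 : ((0 : ℝ), c / Real.sqrt (b ^ 2 + c ^ 2))
        = (c / Real.sqrt (b ^ 2 + c ^ 2)) • ((0 : ℝ), (1 : ℝ)) := by simp
    rw [h2, map_smul, smul_eq_mul, mul_comm]
  intro x₀ x₁ x₂ hx
  have hx12 : (0 : ℝ) < x₁ ^ 2 + x₂ ^ 2 := Real.sqrt_pos.mp (hUsub _ hx)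
  set r := Real.sqrt (x₁ ^ 2 + x₂ ^ 2) with hrdef
  have hrpos : 0 < r := Real.sqrt_pos.mpr hx12
  have hrne : r ≠ 0 := ne_of_gt hrpos
  have hr2 : r ^ 2 = x₁ ^ 2 + x₂ ^ 2 := Real.sq_sqrt hx12.le
  set A := qd0 (qd0 g) x₀ r with hA
  set D := fderiv ℝ G1 (x₀, r) (0, 1) with hD
  set P := G1 (x₀, r) with hP
  -- sqrt derivative at the point
  have hsq1 : HasDerivAt (fun t : ℝ => Real.sqrt (t ^ 2 + x₂ ^ 2)) (x₁ / r) x₁ := by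
    have h1 : HasDerivAt (fun t : ℝ => t ^ 2 + x₂ ^ 2) (2 * x₁) x₁ := by
      simpa using (hasDerivAt_pow 2 x₁).add_const (x₂ ^ 2)
    have := h1.sqrt (ne_of_gt hx12)
    convert this using 1
    rw [hrdef]; field_simp
  have hsq2 : HasDerivAt (fun t : ℝ => Real.sqrt (x₁ ^ 2 + t ^ 2)) (x₂ / r) x₂ := by
    have h1 : HasDerivAt (fun t : ℝ => x₁ ^ 2 + t ^ 2) (2 * x₂) x₂ := by
      simpa using (hasDerivAt_pow 2 x₂).const_add (x₁ ^ 2)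
    have := h1.sqrt (ne_of_gt hx12)
    convert this using 1
    rw [hrdef]; field_simp
  have hcurve1 : HasDerivAt (fun t : ℝ => ((x₀, Real.sqrt (t ^ 2 + x₂ ^ 2)) : ℝ × ℝ))
      ((0 : ℝ), x₁ / r) x₁ := (hasDerivAt_const x₁ x₀).prodMk hsq1
  have hcurve2 : HasDerivAt (fun t : ℝ => ((x₀, Real.sqrt (x₁ ^ 2 + t ^ 2)) : ℝ × ℝ))
      ((0 : ℝ), x₂ / r) x₂ := (hasDerivAt_const x₂ x₀).prodMk hsq2
  -- eventual membership
  have hmem1 : ∀ᶠ b in nhds x₁, ((x₀, Real.sqrt (b ^ 2 + x₂ ^ 2)) : ℝ × ℝ) ∈ U :=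
    hcurve1.continuousAt.preimage_mem_nhds (hUopen.mem_nhds hx)
  have hmem2 : ∀ᶠ c in nhds x₂, ((x₀, Real.sqrt (x₁ ^ 2 + c ^ 2)) : ℝ × ℝ) ∈ U :=
    hcurve2.continuousAt.preimage_mem_nhds (hUopen.mem_nhds hx)
  -- second partial e1
  have e1 : pd1 (pd1 h) x₀ x₁ x₂
      = (x₁ / r) * D * (x₁ / r) + P * ((1 * r - x₁ * (x₁ / r)) / r ^ 2) := by
    have hA1 : HasDerivAt (fun b => G1 (x₀, Real.sqrt (b ^ 2 + x₂ ^ 2))) ((x₁ / r) * D) x₁ := by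
      have hc := (hG1diff _ hx).hasFDerivAt.comp_hasDerivAt x₁ hcurve1
      have h2 : ((0 : ℝ), x₁ / r) = (x₁ / r) • ((0 : ℝ), (1 : ℝ)) := by simp
      rw [h2, map_smul, smul_eq_mul] at hc
      exact hc
    have hB1 : HasDerivAt (fun b : ℝ => b / Real.sqrt (b ^ 2 + x₂ ^ 2))
        ((1 * r - x₁ * (x₁ / r)) / r ^ 2) x₁ :=
      (hasDerivAt_id' (x := x₁)).div hsq1 hrne
    have hAB := hA1.mul hB1
    have heq : pd1 (pd1 h) x₀ x₁ x₂
        = deriv (fun b => G1 (x₀, Real.sqrt (b ^ 2 + x₂ ^ 2)) * (b / Real.sqrt (b ^ 2 + x₂ ^ 2))) x₁ := by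
      rw [pd1]
      exact Filter.EventuallyEq.deriv_eq (hmem1.mono fun b hb => hpd1 b x₂ x₀ hb)
    rw [heq]; exact hAB.deriv
  have e2 : pd2 (pd2 h) x₀ x₁ x₂
      = (x₂ / r) * D * (x₂ / r) + P * ((1 * r - x₂ * (x₂ / r)) / r ^ 2) := by
    have hA2 : HasDerivAt (fun c => G1 (x₀, Real.sqrt (x₁ ^ 2 + c ^ 2))) ((x₂ / r) * D) x₂ := by
      have hc := (hG1diff _ hx).hasFDerivAt.comp_hasDerivAt x₂ hcurve2
      have h2 : ((0 : ℝ), x₂ / r) = (x₂ / r) • ((0 : ℝ), (1 : ℝ)) := by simp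
      rw [h2, map_smul, smul_eq_mul] at hc
      exact hc
    have hB2 : HasDerivAt (fun c : ℝ => c / Real.sqrt (x₁ ^ 2 + c ^ 2))
        ((1 * r - x₂ * (x₂ / r)) / r ^ 2) x₂ :=
      (hasDerivAt_id' (x := x₂)).div hsq2 hrne
    have hAB := hA2.mul hB2
    have heq : pd2 (pd2 h) x₀ x₁ x₂
        = deriv (fun c => G1 (x₀, Real.sqrt (x₁ ^ 2 + c ^ 2)) * (c / Real.sqrt (x₁ ^ 2 + c ^ 2))) x₂ := by
      rw [pd2]
      exact Filter.EventuallyEq.deriv_eq (hmem2.mono fun c hc => hpd2 x₁ c x₀ hc)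
    rw [heq]; exact hAB.deriv
  -- e0 : second partial in x₀ direction
  have e0 : pd0 (pd0 h) x₀ x₁ x₂ = A := by
    have hf : (fun t => pd0 h t x₁ x₂) = fun t => qd0 g t r := by
      funext t
      rw [pd0, qd0]
      congr 1
      funext u
      exact hh u x₁ x₂
    rw [hA]
    show deriv (fun t => pd0 h t x₁ x₂) x₀ = deriv (fun t => qd0 g t r) x₀
    rw [hf]
  -- e3 : qd1 qd1 = D
  have e3 : qd1 (qd1 g) x₀ r = D := by
    have hmem3 : ∀ᶠ s in nhds r, ((x₀, s) : ℝ × ℝ) ∈ U :=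
      ((continuous_const.prodMk continuous_id).continuousAt).preimage_mem_nhds (hUopen.mem_nhds hx)
    have hcurve : HasDerivAt (fun s : ℝ => ((x₀, s) : ℝ × ℝ)) ((0 : ℝ), (1 : ℝ)) r :=
      (hasDerivAt_const r x₀).prodMk (hasDerivAt_id r)
    have hDd := (hG1diff _ hx).hasFDerivAt.comp_hasDerivAt r hcurve
    rw [qd1]
    rw [Filter.EventuallyEq.deriv_eq (hmem3.mono fun s hs => hqd1 x₀ s hs)]
    exact hDd.deriv
  have e4 : pd1 h x₀ x₁ x₂ = P * (x₁ / r) := hpd1 x₁ x₂ x₀ hx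
  have e5 : pd2 h x₀ x₁ x₂ = P * (x₂ / r) := hpd2 x₁ x₂ x₀ hx
  have hP1 : qd1 g x₀ r = P := hqd1 x₀ r hx
  have key : r * (A + D) - (α - 1) * P = 0 := by
    have := hEPD (x₀, r) hx
    rw [show ((x₀, r) : ℝ × ℝ).1 = x₀ from rfl, show ((x₀, r) : ℝ × ℝ).2 = r from rfl] at this
    rw [e3, hP1] at this
    exact this
  have lap : lap3 h x₀ x₁ x₂ = A + D + P / r := by
    rw [lap3, e0, e1, e2]
    field_simp
    linear_combination (P - r * D) * hr2
  constructor
  · rw [lap, e4, e5]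
    field_simp
    linear_combination (x₁ ^ 2 + x₂ ^ 2) * key
  · intro α₁ α₂ hα h1 h2
    rw [lap, e4, e5]
    field_simp
    linear_combination key - P * hα
end
end

section
/- Let α, a, b, c, x₁, x₂ be real numbers with (x₁,x₂) ≠ (0,0), set ρ = √(x₁²+x₂²), and let M be the 3×3 real matrix with rows (−b+(α−1)c, a·x₁/ρ, a·x₂/ρ), (a·x₁/ρ, b·x₁²/ρ² + c·x₂²/ρ², (b−c)·x₁x₂/ρ²), (a·x₂/ρ, (b−c)·x₁x₂/ρ², b·x₂²/ρ² + c·x₁²/ρ²). Then the characteristic polynomial of M satisfies, for all real λ: det(λI − M) = λ³ − αc·λ² − [a² + b² − (α−1)c(b+c)]·λ + c·[a² + b² − (α−1)cb]. -/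
noncomputable section

/-- The Jacobian matrix of a potential meridional field in a cylindrically layered
medium with mass density `ρ^{−α}`, where `a = ∂V_ρ/∂x₀`, `b = ∂V_ρ/∂ρ`, `c = V_ρ/ρ`. -/
def meridMatrix (α a b c x₁ x₂ : ℝ) : Matrix (Fin 3) (Fin 3) ℝ :=
  let ρ := Real.sqrt (x₁ ^ 2 + x₂ ^ 2)
  !![-b + (α - 1) * c, a * x₁ / ρ, a * x₂ / ρ;
     a * x₁ / ρ, b * x₁ ^ 2 / ρ ^ 2 + c * x₂ ^ 2 / ρ ^ 2, (b - c) * x₁ * x₂ / ρ ^ 2;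
     a * x₂ / ρ, (b - c) * x₁ * x₂ / ρ ^ 2, b * x₂ ^ 2 / ρ ^ 2 + c * x₁ ^ 2 / ρ ^ 2]

/-- Characteristic polynomial of the Jacobian matrix of a potential meridional field. -/
theorem stmt12 (α a b c x₁ x₂ : ℝ) (hx : (x₁, x₂) ≠ (0, 0)) :
    ∀ lam : ℝ,
      (lam • (1 : Matrix (Fin 3) (Fin 3) ℝ) - meridMatrix α a b c x₁ x₂).det
        = lam ^ 3 - α * c * lam ^ 2
          - (a ^ 2 + b ^ 2 - (α - 1) * c * (b + c)) * lam
          + c * (a ^ 2 + b ^ 2 - (α - 1) * c * b) := by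
  intro lam
  have hpos : 0 < x₁ ^ 2 + x₂ ^ 2 := by
    rcases (not_and_or.mp (fun h => hx (Prod.ext h.1 h.2))) with h | h <;> positivity
  set ρ := Real.sqrt (x₁ ^ 2 + x₂ ^ 2) with hρdef
  have hρ : ρ ≠ 0 := by positivity
  have hρ2 : ρ ^ 2 = x₁ ^ 2 + x₂ ^ 2 := Real.sq_sqrt hpos.le
  have hu : (x₁ / ρ) ^ 2 + (x₂ / ρ) ^ 2 = 1 := by
    field_simp
    linarith [hρ2]
  rw [meridMatrix]
  simp only [Matrix.det_fin_three, Matrix.smul_apply, Matrix.one_apply, Matrix.sub_apply,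
    Matrix.cons_val', Matrix.cons_val_zero, Matrix.cons_val_one, Matrix.head_cons,
    Matrix.empty_val', Matrix.cons_val_fin_one, Matrix.head_fin_const, Matrix.cons_val_two,
    Matrix.tail_cons, Fin.isValue, Matrix.of_apply, ← hρdef]
  norm_num [smul_eq_mul, Fin.ext_iff]
  linear_combination
      (b * c ^ 2 * (1 - α) * (1 + (x₁ / ρ) ^ 2 + (x₂ / ρ) ^ 2)
      + b ^ 2 * c * (1 + (x₁ / ρ) ^ 2 + (x₂ / ρ) ^ 2)
      + a ^ 2 * c * (1 + (x₁ / ρ) ^ 2 + (x₂ / ρ) ^ 2)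
      + lam * c ^ 2 * (α - 1)
      + lam * b * c * ((x₁ / ρ) ^ 2 + (x₂ / ρ) ^ 2 + α - 1)
      - lam * b ^ 2 - lam * a ^ 2 - lam ^ 2 * c - lam ^ 2 * b) * hu
end
end

section
/- (Eigenvalues of the Jacobian matrix of a potential meridional field.) Let α, a, b, c, x₁, x₂ be real numbers with (x₁,x₂) ≠ (0,0), set ρ = √(x₁²+x₂²), and let M be the 3×3 real matrix with rows (−b+(α−1)c, a·x₁/ρ, a·x₂/ρ), (a·x₁/ρ, b·x₁²/ρ² + c·x₂²/ρ², (b−c)·x₁x₂/ρ²), (a·x₂/ρ, (b−c)·x₁x₂/ρ², b·x₂²/ρ² + c·x₁²/ρ²). Set λ₀ = c and λ_{1,2} = (α−1)c/2 ± √(a² + ((α−1)c/2 − b)²) (the radicand a² + ((α−1)c/2 − b)² is nonnegative). Then for all real λ, det(λI − M) = (λ − λ₀)(λ − λ₁)(λ − λ₂); in particular λ₀, λ₁, λ₂ are exactly the (real) eigenvalues of M counted with multiplicity. -/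
noncomputable section

set_option maxHeartbeats 2000000 in
/-- Eigenvalues of the Jacobian matrix of a potential meridional field:
`λ₀ = c` and `λ_{1,2} = (α−1)c/2 ± √(a² + ((α−1)c/2 − b)²)`. -/
theorem stmt13 (α a b c x₁ x₂ : ℝ) (hx : (x₁, x₂) ≠ (0, 0))
    (lam₀ lam₁ lam₂ : ℝ) (h₀ : lam₀ = c)
    (h₁ : lam₁ = (α - 1) * c / 2
      + Real.sqrt (a ^ 2 + ((α - 1) * c / 2 - b) ^ 2))
    (h₂ : lam₂ = (α - 1) * c / 2
      - Real.sqrt (a ^ 2 + ((α - 1) * c / 2 - b) ^ 2)) :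
    (0 : ℝ) ≤ a ^ 2 + ((α - 1) * c / 2 - b) ^ 2 ∧
    ∀ lam : ℝ,
      (lam • (1 : Matrix (Fin 3) (Fin 3) ℝ) - meridMatrix α a b c x₁ x₂).det
        = (lam - lam₀) * (lam - lam₁) * (lam - lam₂) := by
  have hr : (0 : ℝ) ≤ a ^ 2 + ((α - 1) * c / 2 - b) ^ 2 := by positivity
  refine ⟨hr, fun lam => ?_⟩
  have hx2 : 0 < x₁ ^ 2 + x₂ ^ 2 := by
    rcases (not_and_or.mp (by simpa [Prod.ext_iff] using hx)) with h | h <;> positivity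
  have hρsq : Real.sqrt (x₁ ^ 2 + x₂ ^ 2) ^ 2 = x₁ ^ 2 + x₂ ^ 2 := Real.sq_sqrt hx2.le
  have hρ : Real.sqrt (x₁ ^ 2 + x₂ ^ 2) ≠ 0 := by positivity
  have hsq : Real.sqrt (a ^ 2 + ((α - 1) * c / 2 - b) ^ 2) ^ 2
      = a ^ 2 + ((α - 1) * c / 2 - b) ^ 2 := Real.sq_sqrt hr
  set ρ := Real.sqrt (x₁ ^ 2 + x₂ ^ 2) with hρdef
  obtain ⟨u, hu⟩ : ∃ u : ℝ, u = x₁ / ρ := ⟨_, rfl⟩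
  obtain ⟨v, hv⟩ : ∃ v : ℝ, v = x₂ / ρ := ⟨_, rfl⟩
  have huv : u ^ 2 + v ^ 2 = 1 := by
    rw [hu, hv, div_pow, div_pow, ← add_div, hρsq, div_self hx2.ne']
  have hM : meridMatrix α a b c x₁ x₂ =
      !![-b + (α - 1) * c, a * u, a * v;
         a * u, b * u ^ 2 + c * v ^ 2, (b - c) * (u * v);
         a * v, (b - c) * (u * v), b * v ^ 2 + c * u ^ 2] := by
    ext i j
    fin_cases i <;> fin_cases j <;>
      simp [meridMatrix, hu, hv, ← hρdef] <;> field_simp <;> ring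
  rw [hM, h₀, h₁, h₂]
  have hv2 : v ^ 2 = 1 - u ^ 2 := by linarith
  have hv4 : v ^ 4 = (1 - u ^ 2) ^ 2 := by
    rw [show (4:ℕ) = 2*2 from rfl, pow_mul, hv2]
  obtain ⟨s, hs⟩ : ∃ s : ℝ, s = Real.sqrt (a ^ 2 + ((α - 1) * c / 2 - b) ^ 2) :=
    ⟨_, rfl⟩
  rw [← hs] at hsq ⊢
  simp only [Matrix.det_fin_three]
  norm_num [Matrix.smul_apply, Matrix.sub_apply, Matrix.one_apply, Fin.ext_iff, Matrix.cons_val, Matrix.cons_val_two, Matrix.tail_cons, Matrix.head_cons]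
  ring_nf
  simp only [hv2, hv4, hsq]
  ring
end
end

section
/- (Degenerate points of the Jacobian matrix.) Let α, a, b, c, x₁, x₂ be real numbers with (x₁,x₂) ≠ (0,0), set ρ = √(x₁²+x₂²), and let M be the 3×3 real matrix with rows (−b+(α−1)c, a·x₁/ρ, a·x₂/ρ), (a·x₁/ρ, b·x₁²/ρ² + c·x₂²/ρ², (b−c)·x₁x₂/ρ²), (a·x₂/ρ, (b−c)·x₁x₂/ρ², b·x₂²/ρ² + c·x₁²/ρ²). Then det M = −c·(a² + b² − (α−1)cb); consequently det M = 0 if and only if c = 0 or a² + b² − (α−1)cb = 0. -/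
noncomputable section

/-- Determinant of the Jacobian matrix written in terms of the unit direction
`(u, v) = (x₁/ρ, x₂/ρ)`, with `u² + v² = 1`. -/
lemma meridDet_aux (α a b c u v : ℝ) (huv : u ^ 2 + v ^ 2 = 1) :
    (!![-b + (α - 1) * c, a * u, a * v;
        a * u, b * u ^ 2 + c * v ^ 2, (b - c) * u * v;
        a * v, (b - c) * u * v, b * v ^ 2 + c * u ^ 2] : Matrix (Fin 3) (Fin 3) ℝ).det
      = -(c * (a ^ 2 + b ^ 2 - (α - 1) * c * b)) := by
  simp [Matrix.det_fin_three]
  linear_combination (-(c * (a ^ 2 + b ^ 2 + b * c - α * b * c)) * (1 + u ^ 2 + v ^ 2)) * huv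

/-- Degenerate points of the Jacobian matrix of a potential meridional field:
`det M = −c(a² + b² − (α−1)cb)`, which vanishes iff `c = 0` or
`a² + b² − (α−1)cb = 0`. -/
theorem stmt14 (α a b c x₁ x₂ : ℝ) (hx : (x₁, x₂) ≠ (0, 0)) :
    (meridMatrix α a b c x₁ x₂).det = -(c * (a ^ 2 + b ^ 2 - (α - 1) * c * b))
    ∧ ((meridMatrix α a b c x₁ x₂).det = 0
        ↔ c = 0 ∨ a ^ 2 + b ^ 2 - (α - 1) * c * b = 0) := by
  have hxx : 0 < x₁ ^ 2 + x₂ ^ 2 := by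
    have h : x₁ ≠ 0 ∨ x₂ ≠ 0 := by
      by_contra h
      push_neg at h
      exact hx (by simp [h.1, h.2])
    rcases h with h | h
    · positivity
    · positivity
  set ρ := Real.sqrt (x₁ ^ 2 + x₂ ^ 2) with hρdef
  have hρ : 0 < ρ := Real.sqrt_pos.mpr hxx
  have hρ2 : ρ ^ 2 = x₁ ^ 2 + x₂ ^ 2 := Real.sq_sqrt hxx.le
  have huv : (x₁ / ρ) ^ 2 + (x₂ / ρ) ^ 2 = 1 := by
    rw [div_pow, div_pow, ← add_div, ← hρ2, div_self (pow_ne_zero 2 hρ.ne')]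
  have hM : meridMatrix α a b c x₁ x₂
      = !![-b + (α - 1) * c, a * (x₁ / ρ), a * (x₂ / ρ);
           a * (x₁ / ρ), b * (x₁ / ρ) ^ 2 + c * (x₂ / ρ) ^ 2, (b - c) * (x₁ / ρ) * (x₂ / ρ);
           a * (x₂ / ρ), (b - c) * (x₁ / ρ) * (x₂ / ρ),
             b * (x₂ / ρ) ^ 2 + c * (x₁ / ρ) ^ 2] := by
    unfold meridMatrix
    ext i j
    fin_cases i <;> fin_cases j <;> simp <;> ring
  have hdet : (meridMatrix α a b c x₁ x₂).det
      = -(c * (a ^ 2 + b ^ 2 - (α - 1) * c * b)) := by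
    rw [hM]
    exact meridDet_aux α a b c (x₁ / ρ) (x₂ / ρ) huv
  refine ⟨hdet, ?_⟩
  rw [hdet, neg_eq_zero, mul_eq_zero]
end
end

section
/- (Structure of the set of equilibria of gradient systems with α-axial-hyperbolic harmonic meridional potential.) Let α, a, b, x₁, x₂ be real numbers with (x₁,x₂) ≠ (0,0), set ρ = √(x₁²+x₂²), and let M₀ be the matrix M(α,a,b,c,x₁,x₂) with c = 0, i.e. the 3×3 real matrix with rows (−b, a·x₁/ρ, a·x₂/ρ), (a·x₁/ρ, b·x₁²/ρ², b·x₁x₂/ρ²), (a·x₂/ρ, b·x₁x₂/ρ², b·x₂²/ρ²). Then: (i) det(λI − M₀) = λ(λ − √(a²+b²))(λ + √(a²+b²)) for all real λ, so the eigenvalues of M₀ are 0, √(a²+b²), −√(a²+b²); (ii) det M₀ = 0, i.e. M₀ is degenerate; (iii) if (a,b) ≠ (0,0), then M₀ has exactly one negative eigenvalue and exactly one positive eigenvalue (the index and the degree of instability are both equal to one, for any α). -/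
noncomputable section

open Polynomial

/-- Evaluation of the characteristic polynomial of a matrix. -/
lemma eval_charpoly_aux (M : Matrix (Fin 3) (Fin 3) ℝ) (t : ℝ) :
    (M.charpoly).eval t = (t • (1 : Matrix (Fin 3) (Fin 3) ℝ) - M).det := by
  rw [Matrix.charpoly]
  rw [show (Matrix.charmatrix M).det.eval t = (evalRingHom t) (Matrix.charmatrix M).det from rfl,
    RingHom.map_det]
  congr 1
  ext i j
  by_cases h : i = j
  · subst h
    simp [Matrix.charmatrix_apply_eq, Matrix.one_apply]
  · simp [Matrix.charmatrix_apply_ne _ _ _ h, Matrix.one_apply, h]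

/-- Structure of the set of equilibria of gradient systems with `α`-axial-hyperbolic
harmonic meridional potential: at an equilibrium point (`c = V_ρ/ρ = 0`) the Jacobian
matrix has eigenvalues `0, √(a²+b²), −√(a²+b²)`; it is degenerate, and (when
`(a,b) ≠ (0,0)`) the index and the degree of instability are both equal to one. -/
theorem stmt15 (α a b x₁ x₂ : ℝ) (hx : (x₁, x₂) ≠ (0, 0)) :
    (∀ lam : ℝ,
      (lam • (1 : Matrix (Fin 3) (Fin 3) ℝ) - meridMatrix α a b 0 x₁ x₂).det
        = lam * (lam - Real.sqrt (a ^ 2 + b ^ 2))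
            * (lam + Real.sqrt (a ^ 2 + b ^ 2)))
    ∧ (meridMatrix α a b 0 x₁ x₂).det = 0
    ∧ ((a, b) ≠ (0, 0) →
        (((meridMatrix α a b 0 x₁ x₂).charpoly.roots.filter
            (fun t : ℝ => t < 0)).card = 1
        ∧ (((meridMatrix α a b 0 x₁ x₂).charpoly.roots.filter
            (fun t : ℝ => 0 < t)).card = 1))) := by
  have h2 : 0 < x₁ ^ 2 + x₂ ^ 2 := by
    rcases eq_or_ne x₁ 0 with h1 | h1
    · have h2' : x₂ ≠ 0 := fun h2' => hx (by rw [h1, h2'])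
      positivity
    · positivity
  have hρ2 : Real.sqrt (x₁ ^ 2 + x₂ ^ 2) ^ 2 = x₁ ^ 2 + x₂ ^ 2 := Real.sq_sqrt h2.le
  have hρ : Real.sqrt (x₁ ^ 2 + x₂ ^ 2) ≠ 0 := by positivity
  set s := Real.sqrt (a ^ 2 + b ^ 2) with hsdef
  have hs2 : s ^ 2 = a ^ 2 + b ^ 2 := Real.sq_sqrt (by positivity)
  have part1 : ∀ lam : ℝ,
      (lam • (1 : Matrix (Fin 3) (Fin 3) ℝ) - meridMatrix α a b 0 x₁ x₂).det
        = lam * (lam - s) * (lam + s) := by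
    intro lam
    have hrhs : lam * (lam - s) * (lam + s) = lam ^ 3 - (a ^ 2 + b ^ 2) * lam := by
      linear_combination (-lam) * hs2
    rw [hrhs]
    simp only [meridMatrix]
    rw [Matrix.det_fin_three]
    simp [Matrix.one_apply, Fin.ext_iff]
    set ρ := Real.sqrt (x₁ ^ 2 + x₂ ^ 2)
    field_simp
    linear_combination (ρ ^ 2 * (lam * b ^ 2 + lam * a ^ 2 + lam ^ 2 * b)) * hρ2
  refine ⟨part1, ?_, ?_⟩
  · have h0 := part1 0
    simp only [zero_smul, zero_sub, Matrix.det_neg, Fintype.card_fin, zero_mul, zero_sub,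
      zero_add, mul_zero] at h0
    simpa using h0
  · intro hab
    have hs : 0 < s := by
      rw [hsdef]
      apply Real.sqrt_pos.mpr
      rcases eq_or_ne a 0 with h1 | h1
      · have h2' : b ≠ 0 := fun h2' => hab (by rw [h1, h2'])
        positivity
      · positivity
    have hcp : (meridMatrix α a b 0 x₁ x₂).charpoly
        = (X : ℝ[X]) * (X - C s) * (X + C s) := by
      apply Polynomial.funext
      intro t
      rw [eval_charpoly_aux, part1 t]
      simp
    have h1 : ((X : ℝ[X]) * (X - C s)) ≠ 0 := (monic_X.mul (monic_X_sub_C s)).ne_zero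
    have h2' : ((X : ℝ[X]) + C s) ≠ 0 := by
      rw [← sub_neg_eq_add, ← C_neg]; exact (monic_X_sub_C (-s)).ne_zero
    have hroots : (meridMatrix α a b 0 x₁ x₂).charpoly.roots = {0} + {s} + {-s} := by
      rw [hcp, roots_mul (mul_ne_zero h1 h2'),
        roots_mul (mul_ne_zero monic_X.ne_zero (monic_X_sub_C s).ne_zero),
        ← sub_neg_eq_add, ← C_neg, roots_X_sub_C, roots_X, roots_X_sub_C]
    rw [hroots]
    have hns : ¬ s < 0 := not_lt.mpr hs.le
    have hn0 : ¬ (0:ℝ) < 0 := lt_irrefl 0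
    have hneg : -s < 0 := neg_neg_iff_pos.mpr hs
    constructor <;>
    · simp [Multiset.filter_add, Multiset.filter_singleton, hs, hns, hneg, hneg.not_gt, hn0]
end
end
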